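/- arXiv:2401.00628 — 2 statements merged into one kernel-verified Lean document; each statement's English description precedes it below -/
import Mathlib

section
/- Let d ≥ 1. For every pair of permutations ρ, σ ∈ S_d there exists exactly one strictly decreasing walk from ρ to σ in the Hurwitz–Cayley graph, i.e., exactly one sequence of transpositions ((i_1 j_1), …, (i_r j_r)) with i_k < j_k and j_1 > j_2 > ⋯ > j_r such that ρ·(i_1 j_1)⋯(i_r j_r) = σ; moreover its length r equals d − ℓ(ρ⁻¹σ), so this walk is a geodesic. -/
noncomputable section

/-- The number of cycles of a permutation of `{1,…,d}`, counting fixed points as 1-cycles. -/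
def ell {d : ℕ} (π : Equiv.Perm (Fin d)) : ℕ :=
  π.cycleType.card + (d - π.support.card)

/-- The transposition associated with a pair of points. -/
def toSwap {d : ℕ} (p : Fin d × Fin d) : Equiv.Perm (Fin d) :=
  Equiv.swap p.1 p.2

/-!
If `(i, j)` heads a decreasing walk with product `π`, every later transposition acts below `j`,
so `j` is the largest point moved by `π` and `i = π j`. Stripping the head leaves a decreasing
walk for `swap j (π j) * π`, which moves fewer points: existence and uniqueness follow by
induction. Left multiplication by `swap j (π j)` splits `j` off its cycle, so each step raises
the number of cycles by one, and a walk for `π` has length `d - ℓ(π)`.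
-/

open Equiv Equiv.Perm Finset

namespace Equiv.Perm

variable {α : Type*} [DecidableEq α] [Fintype α]

theorem IsCycle.card_cycleType_swap_mul_add_card_support {c : Perm α} (hc : c.IsCycle) {x : α}
    (hx : c x ≠ x) :
    Multiset.card (swap x (c x) * c).cycleType + #c.support = #(swap x (c x) * c).support + 2 := by
  by_cases hccx : c (c x) = x
  · rw [hc.eq_swap_of_apply_apply_eq_self hx hccx, swap_apply_left, swap_mul_self,
      cycleType_one, support_one, card_support_swap hx.symm]
    rfl
  · have hx_mem : x ∈ c.support := mem_support.mpr hx
    rw [card_cycleType_eq_one.mpr (hc.swap_mul hx hccx), support_swap_mul_eq c x hccx,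
      sdiff_singleton_eq_erase, ← card_erase_add_one hx_mem]
    omega

theorem card_cycleType_swap_mul_add_card_support {f : Perm α} {x : α} (hx : f x ≠ x) :
    Multiset.card (swap x (f x) * f).cycleType + #f.support =
      Multiset.card f.cycleType + #(swap x (f x) * f).support + 1 := by
  set c := f.cycleOf x
  set g := f * c⁻¹
  have hcx : c x = f x := f.cycleOf_apply_self x
  have hgc : g.Disjoint c := disjoint_mul_inv_of_mem_cycleFactorsFinset
    (cycleOf_mem_cycleFactorsFinset_iff.mpr (mem_support.mpr hx))
  have hf : f = g * c := (inv_mul_cancel_right f c).symm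
  have hswap_le : (swap x (f x)).support ≤ c.support := by
    rw [support_swap (Ne.symm hx), ← hcx]
    have hx_mem : x ∈ c.support := mem_support.mpr (hcx ▸ hx)
    exact insert_subset hx_mem (singleton_subset_iff.mpr (apply_mem_support.mpr hx_mem))
  have hgs : g.Disjoint (swap x (f x)) := hgc.mono le_rfl hswap_le
  have hgsc : g.Disjoint (swap x (f x) * c) :=
    hgc.mono le_rfl ((support_mul_le _ _).trans (sup_le hswap_le le_rfl))
  have hsf : swap x (f x) * f = g * (swap x (f x) * c) := by
    rw [← mul_assoc, hgs.commute.eq, mul_assoc, ← hf]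
  have hfct : f.cycleType = g.cycleType + c.cycleType := by rw [hf]; exact hgc.cycleType_mul
  have hfsupp : #f.support = #g.support + #c.support := by rw [hf]; exact hgc.card_support_mul
  have hc : c.IsCycle := f.isCycle_cycleOf hx
  have hcycle := hc.card_cycleType_swap_mul_add_card_support (hcx ▸ hx)
  rw [hcx] at hcycle
  rw [hsf, hgsc.cycleType_mul, hgsc.card_support_mul, hfct, hfsupp, Multiset.card_add,
    Multiset.card_add, card_cycleType_eq_one.mpr hc]
  omega

theorem card_parts_partition_swap_mul {f : Perm α} {x : α} (hx : f x ≠ x) :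
    Multiset.card (swap x (f x) * f).partition.parts = Multiset.card f.partition.parts + 1 := by
  have hcount := card_cycleType_swap_mul_add_card_support hx
  have hle := (swap x (f x) * f).support.card_le_univ
  have hle' := f.support.card_le_univ
  simp only [parts_partition, Multiset.card_add, Multiset.card_replicate]
  omega

end Equiv.Perm

section DecreasingWalk

variable {α : Type*} [LinearOrder α]

def IsDecreasingWalk (l : List (α × α)) : Prop :=
  (∀ p ∈ l, p.1 < p.2) ∧ (l.map Prod.snd).Pairwise (· > ·)

def walkProd (l : List (α × α)) : Perm α :=
  (l.map fun p => swap p.1 p.2).prod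

@[simp]
theorem walkProd_nil : walkProd ([] : List (α × α)) = 1 := rfl

@[simp]
theorem walkProd_cons (p : α × α) (l : List (α × α)) :
    walkProd (p :: l) = swap p.1 p.2 * walkProd l := rfl

theorem isDecreasingWalk_nil : IsDecreasingWalk ([] : List (α × α)) := by
  simp [IsDecreasingWalk]

theorem isDecreasingWalk_cons {p : α × α} {l : List (α × α)} :
    IsDecreasingWalk (p :: l) ↔
      p.1 < p.2 ∧ (∀ q ∈ l, q.2 < p.2) ∧ IsDecreasingWalk l := by
  simp only [IsDecreasingWalk, List.forall_mem_cons, List.map_cons, List.pairwise_cons,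
    List.forall_mem_map, gt_iff_lt]
  tauto

theorem walkProd_apply_of_forall_ne {l : List (α × α)} {x : α}
    (h : ∀ q ∈ l, q.1 ≠ x ∧ q.2 ≠ x) : walkProd l x = x := by
  induction l with
  | nil => rfl
  | cons p l ih =>
    rw [List.forall_mem_cons] at h
    rw [walkProd_cons, Perm.mul_apply, ih h.2, swap_apply_of_ne_of_ne h.1.1.symm h.1.2.symm]

namespace IsDecreasingWalk

variable {p : α × α} {l l' : List (α × α)}

theorem walkProd_cons_apply_snd (h : IsDecreasingWalk (p :: l)) :
    walkProd (p :: l) p.2 = p.1 := by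
  obtain ⟨-, hlt, hl⟩ := isDecreasingWalk_cons.mp h
  rw [walkProd_cons, Perm.mul_apply, walkProd_apply_of_forall_ne, swap_apply_right]
  exact fun q hq => ⟨((hl.1 q hq).trans (hlt q hq)).ne, (hlt q hq).ne⟩

theorem walkProd_cons_apply_of_lt (h : IsDecreasingWalk (p :: l)) {x : α} (hx : p.2 < x) :
    walkProd (p :: l) x = x :=
  walkProd_apply_of_forall_ne fun q hq =>
    have hq2 : q.2 ≤ p.2 := by
      rcases List.mem_cons.mp hq with rfl | hq
      · exact le_rfl
      · exact ((isDecreasingWalk_cons.mp h).2.1 q hq).le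
    have hq1 : q.1 < q.2 := h.1 q hq
    ⟨(hq1.trans_le hq2 |>.trans hx).ne, (hq2.trans_lt hx).ne⟩

theorem isGreatest_walkProd_cons (h : IsDecreasingWalk (p :: l)) :
    IsGreatest {x | walkProd (p :: l) x ≠ x} p.2 := by
  refine ⟨?_, fun x hx => ?_⟩
  · rw [Set.mem_ofPred_eq, h.walkProd_cons_apply_snd]
    exact (h.1 p List.mem_cons_self).ne
  · exact not_lt.mp fun hlt => hx (h.walkProd_cons_apply_of_lt hlt)

theorem walkProd_ne_one_of_cons (h : IsDecreasingWalk (p :: l)) : walkProd (p :: l) ≠ 1 :=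
  fun h1 => h.isGreatest_walkProd_cons.1 (by rw [h1]; rfl)

theorem forall_snd_lt (h : IsDecreasingWalk l) {j : α}
    (hfix : ∀ x, j ≤ x → walkProd l x = x) : ∀ q ∈ l, q.2 < j := by
  cases l with
  | nil => simp
  | cons p l =>
    have hp : p.2 < j := not_le.mp fun hle => h.isGreatest_walkProd_cons.1 (hfix p.2 hle)
    intro q hq
    rcases List.mem_cons.mp hq with rfl | hq
    · exact hp
    · exact ((isDecreasingWalk_cons.mp h).2.1 q hq).trans hp

theorem eq_of_walkProd_eq (hl : IsDecreasingWalk l) (hl' : IsDecreasingWalk l')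
    (h : walkProd l = walkProd l') : l = l' := by
  induction l generalizing l' with
  | nil =>
    cases l' with
    | nil => rfl
    | cons p' l' => exact absurd h.symm hl'.walkProd_ne_one_of_cons
  | cons p l ih =>
    cases l' with
    | nil => exact absurd h hl.walkProd_ne_one_of_cons
    | cons p' l' =>
      have hsnd : p.2 = p'.2 :=
        hl.isGreatest_walkProd_cons.unique (h ▸ hl'.isGreatest_walkProd_cons)
      have hfst : p.1 = p'.1 := by
        rw [← hl.walkProd_cons_apply_snd, ← hl'.walkProd_cons_apply_snd, h, hsnd]
      have hpp' : p = p' := Prod.ext hfst hsnd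
      subst hpp'
      rw [walkProd_cons, walkProd_cons, mul_right_inj] at h
      rw [ih (isDecreasingWalk_cons.mp hl).2.2 (isDecreasingWalk_cons.mp hl').2.2 h]

theorem length_add_card_parts_partition [Fintype α] (h : IsDecreasingWalk l) :
    l.length + Multiset.card (walkProd l).partition.parts = Fintype.card α := by
  induction l with
  | nil => simp [parts_partition]
  | cons p l ih =>
    have hstep : swap p.2 (walkProd (p :: l) p.2) * walkProd (p :: l) = walkProd l := by
      rw [h.walkProd_cons_apply_snd, walkProd_cons, swap_comm, swap_mul_self_mul]
    have hmoved : walkProd (p :: l) p.2 ≠ p.2 := h.isGreatest_walkProd_cons.1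
    have hparts := card_parts_partition_swap_mul hmoved
    rw [hstep] at hparts
    have hlen := ih (isDecreasingWalk_cons.mp h).2.2
    rw [List.length_cons]
    omega

end IsDecreasingWalk

theorem exists_isDecreasingWalk_walkProd_eq [Fintype α] (π : Perm α) :
    ∃ l, IsDecreasingWalk l ∧ walkProd l = π := by
  induction hn : #π.support using Nat.strong_induction_on generalizing π with
  | _ n ih =>
  by_cases hπ : π = 1
  · exact ⟨[], isDecreasingWalk_nil, hπ.symm⟩
  have hne : π.support.Nonempty := nonempty_iff_ne_empty.mpr (support_eq_empty_iff.not.mpr hπ)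
  set j := π.support.max' hne
  have hj_mem : j ∈ π.support := π.support.max'_mem hne
  have hj : π j ≠ j := mem_support.mp hj_mem
  have hjπ : π j < j := (π.support.le_max' _ (apply_mem_support.mpr hj_mem)).lt_of_ne hj
  set π' := swap j (π j) * π
  obtain ⟨l, hl, hlπ⟩ := ih _ (hn ▸ card_support_swap_mul hj) π' rfl
  have hfix : ∀ x, j ≤ x → π' x = x := by
    intro x hx
    rcases hx.eq_or_lt with rfl | hjx
    · simp [π']
    · have hπx : π x = x := notMem_support.mp fun hmem =>
        lt_irrefl j (hjx.trans_le (π.support.le_max' x hmem))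
      rw [Perm.mul_apply, hπx, swap_apply_of_ne_of_ne hjx.ne' (hjπ.trans hjx).ne']
  refine ⟨(π j, j) :: l,
    isDecreasingWalk_cons.mpr ⟨hjπ, hl.forall_snd_lt (hlπ ▸ hfix), hl⟩, ?_⟩
  rw [walkProd_cons, hlπ, swap_comm, swap_mul_self_mul]

end DecreasingWalk

theorem ell_eq_card_parts_partition {d : ℕ} (π : Perm (Fin d)) :
    ell π = Multiset.card π.partition.parts := by
  simp [ell, parts_partition]

theorem existsUnique_strictlyDecreasingWalk_general (d : ℕ)
    (ρ σ : Equiv.Perm (Fin d)) :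
    (∃! l : List (Fin d × Fin d),
      (∀ p ∈ l, p.1 < p.2) ∧ (l.map Prod.snd).Pairwise (· > ·) ∧
        ρ * (l.map toSwap).prod = σ) ∧
    (∀ l : List (Fin d × Fin d),
      ((∀ p ∈ l, p.1 < p.2) ∧ (l.map Prod.snd).Pairwise (· > ·) ∧
        ρ * (l.map toSwap).prod = σ) →
      l.length = d - ell (ρ⁻¹ * σ)) := by
  have hwalk : ∀ l : List (Fin d × Fin d),
      ((∀ p ∈ l, p.1 < p.2) ∧ (l.map Prod.snd).Pairwise (· > ·) ∧
        ρ * (l.map toSwap).prod = σ) ↔ IsDecreasingWalk l ∧ walkProd l = ρ⁻¹ * σ := by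
    intro l
    rw [← and_assoc, eq_inv_mul_iff_mul_eq]
    rfl
  simp only [hwalk]
  obtain ⟨l, hl, hlπ⟩ := exists_isDecreasingWalk_walkProd_eq (ρ⁻¹ * σ)
  refine ⟨⟨l, ⟨hl, hlπ⟩, fun l' ⟨hl', hl'π⟩ =>
    hl'.eq_of_walkProd_eq hl (hl'π.trans hlπ.symm)⟩, ?_⟩
  rintro l' ⟨hl', hl'π⟩
  have hlen := hl'.length_add_card_parts_partition
  rw [hl'π] at hlen
  rw [ell_eq_card_parts_partition]
  have hd := Fintype.card_fin d
  omega

/-- Between every pair of permutations `ρ, σ ∈ S_d` there is a unique strictly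
decreasing walk in the Hurwitz–Cayley graph, i.e. a unique sequence of transpositions
`((i_1 j_1), …, (i_r j_r))` with `i_k < j_k`, `j_1 > j_2 > ⋯ > j_r` and
`ρ·(i_1 j_1)⋯(i_r j_r) = σ`; moreover its length is `d - ℓ(ρ⁻¹σ)`, so it is a geodesic. -/
theorem existsUnique_strictlyDecreasingWalk (d : ℕ) (hd : 1 ≤ d)
    (ρ σ : Equiv.Perm (Fin d)) :
    (∃! l : List (Fin d × Fin d),
      (∀ p ∈ l, p.1 < p.2) ∧ (l.map Prod.snd).Pairwise (· > ·) ∧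
        ρ * (l.map toSwap).prod = σ) ∧
    (∀ l : List (Fin d × Fin d),
      ((∀ p ∈ l, p.1 < p.2) ∧ (l.map Prod.snd).Pairwise (· > ·) ∧
        ρ * (l.map toSwap).prod = σ) →
      l.length = d - ell (ρ⁻¹ * σ)) :=
  existsUnique_strictlyDecreasingWalk_general d ρ σ
end
end

section
/- Let d ≥ 1 and r ≥ 0, and for ρ, σ ∈ S_d let W^r_≤(ρ,σ) denote the number of weakly monotone r-step walks from ρ to σ in the Hurwitz–Cayley graph. Then W^r_≤(ι,π) depends only on the cycle type of π: if π and π′ are conjugate in S_d, then W^r_≤(ι,π) = W^r_≤(ι,π′). Consequently W^r_≤(ρ,σ) depends only on the cycle type of ρ⁻¹σ. -/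
noncomputable section

/-- `Wle d r ρ σ` is the number of weakly monotone (weakly increasing) `r`-step walks `ρ → σ` in
the Hurwitz–Cayley graph: sequences of transpositions `((i_1 j_1), …, (i_r j_r))` with `i_k < j_k`,
`j_1 ≤ j_2 ≤ ⋯ ≤ j_r` and `ρ·(i_1 j_1)⋯(i_r j_r) = σ`. -/
def Wle (d r : ℕ) (ρ σ : Equiv.Perm (Fin d)) : ℕ :=
  Nat.card {l : List (Fin d × Fin d) //
    l.length = r ∧ (∀ p ∈ l, p.1 < p.2) ∧ (l.map Prod.snd).Pairwise (· ≤ ·) ∧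
      ρ * (l.map toSwap).prod = σ}

/-!
Let `Z_k ∈ R[S_d]⟦t⟧` sum `t ^ length * (product of the steps)` over the weakly monotone walks
whose steps `(i j)` all have `j ≥ k`. Splitting off the leading steps with `j = k` gives
`Z_k = (1 - t J_k)⁻¹ Z_{k+1}`, where `J_k = ∑_{i<k} (i k)` is the Jucys–Murphy element, so `Z_0` is
the generating series of the complete homogeneous symmetric polynomials in the commuting `J_k`.
An adjacent transposition `s = (a a+1)` commutes with every `J_j` other than `J_a, J_{a+1}`, and
with `J_a + J_{a+1}` and `J_{a+1} J_a`, hence with `(1 - t J_{a+1})(1 - t J_a)`, and so with `Z_0`.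
Adjacent transpositions generate `S_d`, so every coefficient of `Z_0` is central in `R[S_d]`, and
the coefficients of a central element, here the walk counts `W^r_≤(ι, π)`, are class functions.
-/

open Finset Equiv MonoidAlgebra PowerSeries

theorem Commute.of_isUnit_mul_right {M : Type*} [Monoid M] {a u z : M} (hu : IsUnit u)
    (hau : Commute a u) (h : Commute a (u * z)) : Commute a z := by
  obtain ⟨u, rfl⟩ := hu
  simpa using hau.units_inv_right.mul_right h

theorem Equiv.swap_apply_lt_iff {α : Type*} [DecidableEq α] [LT α] {a b c : α}
    (h : a < c ↔ b < c) (x : α) : swap a b x < c ↔ x < c := by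
  rcases eq_or_ne x a with rfl | hxa
  · rw [swap_apply_left, h]
  rcases eq_or_ne x b with rfl | hxb
  · rw [swap_apply_right, h]
  · rw [swap_apply_of_ne_of_ne hxa hxb]

theorem Fin.Iio_eq_insert_Iio_of_val_add_one_eq {d : ℕ} {a b : Fin d} (hab : (a : ℕ) + 1 = b) :
    Iio b = insert a (Iio a) := by
  ext x
  simp only [mem_Iio, mem_insert, Fin.lt_def, Fin.ext_iff]
  omega

namespace PowerSeries

variable {R : Type*} [Ring R]

theorem isUnit_one_sub_X_mul_C (x : R) : IsUnit (1 - X * C x : R⟦X⟧) := by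
  rw [isUnit_iff_constantCoeff]
  simp

theorem commute_C_one_sub_X_mul_C {s x : R} (h : Commute s x) :
    Commute (C s) (1 - X * C x : R⟦X⟧) :=
  (Commute.one_right _).sub_right ((commute_X _).mul_right (h.map C))

theorem one_sub_X_mul_C_mul_one_sub_X_mul_C (x y : R) :
    (1 - X * C y) * (1 - X * C x : R⟦X⟧) = 1 - X * C (x + y) + X ^ 2 * C (y * x) := by
  simp only [mul_sub, sub_mul, one_mul, mul_one, map_add, map_mul, mul_add, mul_assoc,
    (commute_X (C y)).left_comm, pow_two]
  abel

theorem commute_C_one_sub_X_mul_C_mul_one_sub_X_mul_C {s x y : R} (h₁ : Commute s (x + y))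
    (h₂ : Commute s (y * x)) : Commute (C s) ((1 - X * C y) * (1 - X * C x : R⟦X⟧)) := by
  rw [one_sub_X_mul_C_mul_one_sub_X_mul_C]
  exact (commute_C_one_sub_X_mul_C h₁).add_right
    (((commute_X _).pow_right 2).mul_right (h₂.map C))

theorem commute_coeff_of_commute_C {s : R} {φ : R⟦X⟧} (h : Commute (C s) φ) (n : ℕ) :
    Commute s (coeff n φ) := by
  have h := congrArg (coeff n) h.eq
  rwa [coeff_C_mul, coeff_mul_C] at h

theorem commute_C_of_one_sub_X_mul_C_mul_eq {J : ℕ → R} {Z : ℕ → R⟦X⟧} {N a : ℕ} {s : R}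
    (hZ : ∀ k < N, (1 - X * C (J k)) * Z k = Z (k + 1)) (hN : Z N = 1) (ha : a + 1 < N)
    (hJ : ∀ k < N, k ≠ a → k ≠ a + 1 → Commute s (J k))
    (h₁ : Commute s (J a + J (a + 1))) (h₂ : Commute s (J (a + 1) * J a)) :
    Commute (C s) (Z 0) := by
  have step : ∀ k < N, k ≠ a → k ≠ a + 1 → Commute (C s) (Z (k + 1)) →
      Commute (C s) (Z k) := fun k hk hka hkb h =>
    Commute.of_isUnit_mul_right (isUnit_one_sub_X_mul_C _)
      (commute_C_one_sub_X_mul_C (hJ k hk hka hkb)) (by rwa [hZ k hk])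
  have above : Commute (C s) (Z (a + 2)) :=
    Nat.decreasingInduction (motive := fun k _ => a + 2 ≤ k → Commute (C s) (Z k))
      (fun k hk ih hak => step k hk (by omega) (by omega) (ih (by omega)))
      (fun _ => hN ▸ Commute.one_right _) (by omega : a + 2 ≤ N) le_rfl
  have at_a : Commute (C s) (Z a) := by
    -- neither factor need commute with `C s`, but their product does
    refine Commute.of_isUnit_mul_right
      ((isUnit_one_sub_X_mul_C _).mul (isUnit_one_sub_X_mul_C _))
      (commute_C_one_sub_X_mul_C_mul_one_sub_X_mul_C h₁ h₂) ?_
    rwa [mul_assoc, hZ a (by omega), hZ (a + 1) ha]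
  exact Nat.decreasingInduction (motive := fun k _ => Commute (C s) (Z k))
    (fun k hk ih => step k (by omega) (by omega) (by omega) ih) at_a (Nat.zero_le a)

end PowerSeries

variable {R : Type*} [Ring R] {d : ℕ}

section JucysMurphy

variable (R) in
def jucysMurphy (j : Fin d) : MonoidAlgebra R (Perm (Fin d)) :=
  ∑ i ∈ Iio j, of R _ (swap i j)

theorem of_mul_of_swap (g : Perm (Fin d)) (i j : Fin d) :
    of R _ g * of R _ (swap i j) = of R _ (swap (g i) (g j)) * of R _ g := by
  rw [← map_mul, ← map_mul, swap_apply_apply, inv_mul_cancel_right]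

theorem of_commute_jucysMurphy {g : Perm (Fin d)} {j : Fin d} (hj : g j = j)
    (hg : ∀ i, g i < j ↔ i < j) : Commute (of R _ g) (jucysMurphy R j) := by
  simp only [Commute, SemiconjBy, jucysMurphy, mul_sum, sum_mul, of_mul_of_swap, hj]
  exact sum_equiv g (fun i => by simp [hg]) fun _ _ => rfl

theorem jucysMurphy_commute {a b : Fin d} (hab : a < b) :
    Commute (jucysMurphy R a) (jucysMurphy R b) :=
  Commute.sum_left _ _ _ fun i hi => by
    have hia : i < a := mem_Iio.mp hi
    exact of_commute_jucysMurphy (swap_apply_of_ne_of_ne (hia.trans hab).ne' hab.ne')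
      (swap_apply_lt_iff (iff_of_true (hia.trans hab) hab))

variable {a b : Fin d}

theorem of_swap_commute_jucysMurphy (hab : (a : ℕ) + 1 = b) {j : Fin d} (hja : j ≠ a)
    (hjb : j ≠ b) : Commute (of R _ (swap a b)) (jucysMurphy R j) :=
  of_commute_jucysMurphy (swap_apply_of_ne_of_ne hja hjb)
    (swap_apply_lt_iff (by simp only [Fin.lt_def, ne_eq, Fin.ext_iff] at *; omega))

theorem of_swap_mul_jucysMurphy_left (hab : (a : ℕ) + 1 = b) :
    of R _ (swap a b) * jucysMurphy R a = jucysMurphy R b * of R _ (swap a b) - 1 := by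
  have hlt : a < b := Fin.lt_def.mpr (by omega)
  rw [jucysMurphy, jucysMurphy, Fin.Iio_eq_insert_Iio_of_val_add_one_eq hab,
    sum_insert (by simp), mul_sum, add_mul, sum_mul, ← map_mul, swap_mul_self, map_one,
    add_sub_cancel_left]
  refine sum_congr rfl fun i hi => ?_
  have hia : i < a := mem_Iio.mp hi
  rw [of_mul_of_swap, swap_apply_left, swap_apply_of_ne_of_ne hia.ne (hia.trans hlt).ne]

theorem of_swap_mul_jucysMurphy_right (hab : (a : ℕ) + 1 = b) :
    of R _ (swap a b) * jucysMurphy R b = jucysMurphy R a * of R _ (swap a b) + 1 := by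
  have hlt : a < b := Fin.lt_def.mpr (by omega)
  rw [jucysMurphy, jucysMurphy, Fin.Iio_eq_insert_Iio_of_val_add_one_eq hab,
    sum_insert (by simp), mul_add, mul_sum, sum_mul, ← map_mul, swap_mul_self, map_one, add_comm]
  refine congrArg (· + 1) (sum_congr rfl fun i hi => ?_)
  have hia : i < a := mem_Iio.mp hi
  rw [of_mul_of_swap, swap_apply_right, swap_apply_of_ne_of_ne hia.ne (hia.trans hlt).ne]

theorem of_swap_commute_jucysMurphy_add (hab : (a : ℕ) + 1 = b) :
    Commute (of R _ (swap a b)) (jucysMurphy R a + jucysMurphy R b) := by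
  rw [Commute, SemiconjBy, mul_add, add_mul, of_swap_mul_jucysMurphy_left hab,
    of_swap_mul_jucysMurphy_right hab]
  abel

theorem of_swap_commute_jucysMurphy_mul (hab : (a : ℕ) + 1 = b) :
    Commute (of R _ (swap a b)) (jucysMurphy R b * jucysMurphy R a) := by
  rw [Commute, SemiconjBy, ← mul_assoc, of_swap_mul_jucysMurphy_right hab, add_mul, one_mul,
    mul_assoc, of_swap_mul_jucysMurphy_left hab, mul_sub, mul_one, sub_add_cancel, ← mul_assoc,
    (jucysMurphy_commute (Fin.lt_def.mpr (by omega))).eq]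

end JucysMurphy

def IsMonoWalk (k : ℕ) (l : List (Fin d × Fin d)) : Prop :=
  (∀ p ∈ l, p.1 < p.2 ∧ k ≤ (p.2 : ℕ)) ∧ (l.map Prod.snd).Pairwise (· ≤ ·)

theorem isMonoWalk_nil (k : ℕ) : IsMonoWalk k ([] : List (Fin d × Fin d)) := by
  simp [IsMonoWalk]

theorem isMonoWalk_cons {k : ℕ} {i j : Fin d} {w : List (Fin d × Fin d)} :
    IsMonoWalk k ((i, j) :: w) ↔ i < j ∧ k ≤ j ∧ IsMonoWalk j w := by
  simp only [IsMonoWalk, List.mem_cons, forall_eq_or_imp, List.map_cons, List.pairwise_cons,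
    List.forall_mem_map, Fin.val_fin_le]
  constructor
  · rintro ⟨⟨⟨hij, hkj⟩, hw⟩, hjw, hmono⟩
    exact ⟨hij, hkj, fun p hp => ⟨(hw p hp).1, hjw p hp⟩, hmono⟩
  · rintro ⟨hij, hkj, hw, hmono⟩
    exact ⟨⟨⟨hij, hkj⟩, fun p hp => ⟨(hw p hp).1, hkj.trans (hw p hp).2⟩⟩,
      fun p hp => (hw p hp).2, hmono⟩

variable (d) in
def monoWalks (k r : ℕ) : Finset (List (Fin d × Fin d)) :=
  ((List.finite_length_eq (Fin d × Fin d) r).subset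
    (t := {l | l.length = r ∧ IsMonoWalk k l}) fun _ hl => hl.1).toFinset

theorem mem_monoWalks {k r : ℕ} {l : List (Fin d × Fin d)} :
    l ∈ monoWalks d k r ↔ l.length = r ∧ IsMonoWalk k l := by
  simp [monoWalks]

theorem monoWalks_zero (k : ℕ) : monoWalks d k 0 = {[]} := by
  ext l
  simp only [mem_monoWalks, List.length_eq_zero_iff, mem_singleton, and_iff_left_iff_imp]
  rintro rfl
  exact isMonoWalk_nil k

theorem monoWalks_self_succ (r : ℕ) : monoWalks d d (r + 1) = ∅ := by
  ext l
  rcases l with _ | ⟨⟨i, j⟩, w⟩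
  · simp [mem_monoWalks]
  · simp only [mem_monoWalks, isMonoWalk_cons, notMem_empty, iff_false]
    omega

theorem monoWalks_succ {k : ℕ} (hk : k < d) (r : ℕ) :
    monoWalks d k (r + 1) = monoWalks d (k + 1) (r + 1) ∪
      (Iio (⟨k, hk⟩ : Fin d) ×ˢ monoWalks d k r).image fun q => (q.1, ⟨k, hk⟩) :: q.2 := by
  ext l
  rcases l with _ | ⟨⟨i, j⟩, w⟩
  · simp [mem_monoWalks]
  simp only [mem_union, mem_image, mem_product, mem_monoWalks, isMonoWalk_cons, mem_Iio,
    List.length_cons, List.cons.injEq, Prod.mk.injEq, Prod.exists, add_left_inj]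
  constructor
  · rintro ⟨hw, hij, hkj, hmw⟩
    rcases hkj.lt_or_eq with hkj | rfl
    · exact Or.inl ⟨hw, hij, hkj, hmw⟩
    · exact Or.inr ⟨i, w, ⟨hij, hw, hmw⟩, ⟨rfl, rfl⟩, rfl⟩
  · rintro (⟨hw, hij, hkj, hmw⟩ | ⟨i, w, ⟨hik, hw, hmw⟩, ⟨rfl, rfl⟩, rfl⟩)
    · exact ⟨hw, hij, by omega, hmw⟩
    · exact ⟨hw, hik, le_rfl, hmw⟩

variable (R d) in
def walkSum (k r : ℕ) : MonoidAlgebra R (Perm (Fin d)) :=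
  ∑ l ∈ monoWalks d k r, of R _ (l.map toSwap).prod

theorem walkSum_zero (k : ℕ) : walkSum R d k 0 = 1 := by
  rw [walkSum, monoWalks_zero, sum_singleton, List.map_nil, List.prod_nil, map_one]

theorem walkSum_self_succ (r : ℕ) : walkSum R d d (r + 1) = 0 := by
  simp [walkSum, monoWalks_self_succ]

theorem walkSum_succ {k : ℕ} (hk : k < d) (r : ℕ) :
    walkSum R d k (r + 1) =
      walkSum R d (k + 1) (r + 1) + jucysMurphy R ⟨k, hk⟩ * walkSum R d k r := by
  have hdisj : Disjoint (monoWalks d (k + 1) (r + 1))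
      ((Iio (⟨k, hk⟩ : Fin d) ×ˢ monoWalks d k r).image fun q => (q.1, ⟨k, hk⟩) :: q.2) := by
    refine disjoint_left.mpr fun l hl hl' => ?_
    obtain ⟨q, -, rfl⟩ := mem_image.mp hl'
    have := (mem_monoWalks.mp hl).2
    rw [isMonoWalk_cons] at this
    exact absurd this.2.1 (by simp)
  rw [walkSum, monoWalks_succ hk, sum_union hdisj, sum_image (by simp), sum_product, jucysMurphy,
    sum_mul]
  congr 1
  refine sum_congr rfl fun i _ => ?_
  simp only [walkSum, mul_sum, List.map_cons, List.prod_cons, toSwap, map_mul]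

theorem coeff_walkSum (k r : ℕ) (π : Perm (Fin d)) :
    (walkSum R d k r).coeff π = #{l ∈ monoWalks d k r | (l.map toSwap).prod = π} := by
  simp [walkSum, Finsupp.single_apply, sum_boole]

variable (R d) in
def walkSeries (k : ℕ) : (MonoidAlgebra R (Perm (Fin d)))⟦X⟧ :=
  PowerSeries.mk (walkSum R d k)

theorem walkSeries_self : walkSeries R d d = 1 := by
  ext (_ | r) <;> simp [walkSeries, walkSum_zero, walkSum_self_succ]

theorem one_sub_X_mul_C_mul_walkSeries {k : ℕ} (hk : k < d) :
    (1 - X * C (jucysMurphy R ⟨k, hk⟩)) * walkSeries R d k = walkSeries R d (k + 1) := by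
  ext (_ | r)
  · simp [walkSeries, walkSum_zero]
  · simp [walkSeries, sub_mul, mul_assoc, coeff_succ_X_mul, walkSum_succ hk]

theorem C_of_swap_commute_walkSeries {a b : Fin d} (hab : (a : ℕ) + 1 = b) :
    Commute (C (of R _ (swap a b))) (walkSeries R d 0) := by
  have hb : (⟨a + 1, hab ▸ b.isLt⟩ : Fin d) = b := Fin.ext hab
  refine commute_C_of_one_sub_X_mul_C_mul_eq
    (J := fun k => if h : k < d then jucysMurphy R ⟨k, h⟩ else 0) (N := d) (a := a)
    (fun k hk => by simpa only [dif_pos hk] using one_sub_X_mul_C_mul_walkSeries hk)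
    walkSeries_self (hab ▸ b.isLt) (fun k hk hka hkb => ?_) ?_ ?_
  · simp only [dif_pos hk]
    exact of_swap_commute_jucysMurphy hab (Fin.ne_of_val_ne hka) (Fin.ne_of_val_ne (hab ▸ hkb))
  · simpa only [dif_pos a.isLt, dif_pos (hab ▸ b.isLt), hb] using of_swap_commute_jucysMurphy_add hab
  · simpa only [dif_pos a.isLt, dif_pos (hab ▸ b.isLt), hb] using of_swap_commute_jucysMurphy_mul hab

theorem of_commute_walkSum (g : Perm (Fin d)) (r : ℕ) :
    Commute (of R _ g) (walkSum R d 0 r) := by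
  rcases d with _ | n
  · rw [Subsingleton.elim g 1, map_one]
    exact Commute.one_left _
  have hg : g ∈ Submonoid.closure (Set.range fun i : Fin n => swap i.castSucc i.succ) := by
    rw [Perm.mclosure_swap_castSucc_succ]
    trivial
  induction hg using Submonoid.closure_induction with
  | mem s hs =>
    obtain ⟨i, rfl⟩ := hs
    simpa only [walkSeries, coeff_mk] using commute_coeff_of_commute_C
      (C_of_swap_commute_walkSeries (R := R) (a := i.castSucc) (b := i.succ) rfl) r
  | one => simpa only [map_one] using Commute.one_left _
  | mul x y _ _ hx hy => simpa only [map_mul] using hx.mul_left hy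

theorem Wle_eq_Wle_one_inv_mul (d r : ℕ) (ρ σ : Perm (Fin d)) :
    Wle d r ρ σ = Wle d r 1 (ρ⁻¹ * σ) := by
  simp only [Wle, one_mul, eq_inv_mul_iff_mul_eq]

theorem Wle_one_eq_card (d r : ℕ) (π : Perm (Fin d)) :
    Wle d r 1 π = #{l ∈ monoWalks d 0 r | (l.map toSwap).prod = π} := by
  rw [Wle, ← Nat.card_eq_finsetCard]
  refine Nat.card_congr (subtypeEquivRight fun l => ?_)
  simp [mem_monoWalks, IsMonoWalk, and_assoc]

theorem Wle_one_conj (d r : ℕ) (g π : Perm (Fin d)) :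
    Wle d r 1 (g * π * g⁻¹) = Wle d r 1 π := by
  have h := congrArg (fun z => z.coeff (g * π)) (of_commute_walkSum (R := ℤ) g r).eq
  simp only [of_apply, coeff_single_mul_mul, coeff_mul_single_apply, one_mul, mul_one,
    coeff_walkSum, ← Wle_one_eq_card, Nat.cast_inj] at h
  exact h.symm

theorem Wle_conj_invariant_general (d r : ℕ) :
    (∀ π π' : Equiv.Perm (Fin d), IsConj π π' → Wle d r 1 π = Wle d r 1 π') ∧
    (∀ ρ σ ρ' σ' : Equiv.Perm (Fin d), IsConj (ρ⁻¹ * σ) (ρ'⁻¹ * σ') →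
      Wle d r ρ σ = Wle d r ρ' σ') := by
  have hconj : ∀ π π' : Perm (Fin d), IsConj π π' → Wle d r 1 π = Wle d r 1 π' := by
    intro π π' h
    obtain ⟨g, rfl⟩ := isConj_iff.mp h
    exact (Wle_one_conj d r g π).symm
  refine ⟨hconj, fun ρ σ ρ' σ' h => ?_⟩
  rw [Wle_eq_Wle_one_inv_mul, Wle_eq_Wle_one_inv_mul d r ρ']
  exact hconj _ _ h

/-- The number of weakly monotone `r`-step walks from the identity to `π`
depends only on the conjugacy class (cycle type) of `π`; consequently `W^r_≤(ρ,σ)` depends only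
on the cycle type of `ρ⁻¹σ`. -/
theorem Wle_conj_invariant (d r : ℕ) (hd : 1 ≤ d) :
    (∀ π π' : Equiv.Perm (Fin d), IsConj π π' → Wle d r 1 π = Wle d r 1 π') ∧
    (∀ ρ σ ρ' σ' : Equiv.Perm (Fin d), IsConj (ρ⁻¹ * σ) (ρ'⁻¹ * σ') →
      Wle d r ρ σ = Wle d r ρ' σ') :=
  Wle_conj_invariant_general d r
end
end
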